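/- arXiv:1605.05604 — 4 statements merged into one kernel-verified Lean document; each statement's English description precedes it below -/
import Mathlib

section
/- Let b : ℝ^m → ℝ^m satisfy ⟨b(ξ), ξ⟩ ≤ C₁(1 + |ξ|²) for all ξ, and |b(ξ) − ⟨b(ξ),ξ⟩ξ/|ξ|²| ≤ C₂(1 + |ξ|) for all ξ ≠ 0. Let J ∈ ℝ^{m×m} with |J − I| ≤ 1/2 (operator norm), and let z, h ∈ ℝ^m with |h| ≤ C₃ and |z| ≥ (C₃ + 1) ∨ (4C₃). Then ⟨z, J b(z + h)⟩ ≤ (4C₁ + 3C₂)|z|². -/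
/-!
Split `b (z + h) = α • (z + h) + t` into its radial and tangential parts. The radial coefficient
`α` is only bounded above, by `2 * C₁`, but this suffices because `⟪z, J (z + h)⟫ ≥ 0`: `J` is
within `1 / 2` of the identity and `h` is small compared with `z`. The tangential part is
controlled in norm by `C₂ * (1 + ‖z + h‖) ≤ 2 * C₂ * ‖z‖`.
-/

open scoped RealInnerProductSpace

lemma div_le_two_mul_of_le_mul_one_add {a C s : ℝ} (ha : a ≤ C * (1 + s)) (hC : 0 ≤ C)
    (hs : 1 ≤ s) : a / s ≤ 2 * C := by
  rw [div_le_iff₀ (by linarith)]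
  nlinarith

section NearIdentity

variable {E : Type*} [NormedAddCommGroup E] [InnerProductSpace ℝ E] {J : E →L[ℝ] E} {ε : ℝ}

lemma norm_apply_le_of_norm_sub_one_le (hJ : ‖J - 1‖ ≤ ε) (x : E) :
    ‖J x‖ ≤ (1 + ε) * ‖x‖ :=
  calc ‖J x‖ = ‖x + (J - 1) x‖ := by simp
    _ ≤ ‖x‖ + ε * ‖x‖ := (norm_add_le _ _).trans (by gcongr; exact (J - 1).le_of_opNorm_le hJ x)
    _ = (1 + ε) * ‖x‖ := by ring

lemma inner_apply_le_of_norm_sub_one_le (hJ : ‖J - 1‖ ≤ ε) (x y : E) :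
    ⟪x, J y⟫ ≤ (1 + ε) * (‖x‖ * ‖y‖) :=
  calc ⟪x, J y⟫ ≤ ‖x‖ * ‖J y‖ := real_inner_le_norm x (J y)
    _ ≤ ‖x‖ * ((1 + ε) * ‖y‖) := by gcongr; exact norm_apply_le_of_norm_sub_one_le hJ y
    _ = (1 + ε) * (‖x‖ * ‖y‖) := by ring

lemma le_inner_self_apply_of_norm_sub_one_le (hJ : ‖J - 1‖ ≤ ε) (x : E) :
    (1 - ε) * ‖x‖ ^ 2 ≤ ⟪x, J x⟫ := by
  have hsplit : ⟪x, J x⟫ = ‖x‖ ^ 2 + ⟪x, (J - 1) x⟫ := by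
    simp [inner_sub_right]
  have hdev : -⟪x, (J - 1) x⟫ ≤ ε * ‖x‖ ^ 2 :=
    calc -⟪x, (J - 1) x⟫ = ⟪-x, (J - 1) x⟫ := (inner_neg_left _ _).symm
      _ ≤ ‖x‖ * ‖(J - 1) x‖ := by simpa using real_inner_le_norm (-x) ((J - 1) x)
      _ ≤ ‖x‖ * (ε * ‖x‖) := by gcongr; exact (J - 1).le_of_opNorm_le hJ x
      _ = ε * ‖x‖ ^ 2 := by ring
  linarith

lemma inner_apply_add_nonneg_of_norm_sub_one_le (hJ : ‖J - 1‖ ≤ ε) {z h : E}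
    (hzh : (1 + ε) * ‖h‖ ≤ (1 - ε) * ‖z‖) : 0 ≤ ⟪z, J (z + h)⟫ := by
  have hz := le_inner_self_apply_of_norm_sub_one_le hJ z
  have hh : -⟪z, J h⟫ ≤ (1 + ε) * (‖z‖ * ‖h‖) := by
    simpa using inner_apply_le_of_norm_sub_one_le hJ (-z) h
  rw [map_add, inner_add_right]
  nlinarith [mul_le_mul_of_nonneg_left hzh (norm_nonneg z)]

end NearIdentity

theorem drift_radial_tangential_bound_general {m : ℕ} (C₁ C₂ C₃ : ℝ)
    (b : EuclideanSpace ℝ (Fin m) → EuclideanSpace ℝ (Fin m))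
    (hb1 : ∀ ξ, ⟪b ξ, ξ⟫ ≤ C₁ * (1 + ‖ξ‖ ^ 2))
    (hb2 : ∀ ξ, ξ ≠ 0 → ‖b ξ - (⟪b ξ, ξ⟫ / ‖ξ‖ ^ 2) • ξ‖ ≤ C₂ * (1 + ‖ξ‖))
    (J : EuclideanSpace ℝ (Fin m) →L[ℝ] EuclideanSpace ℝ (Fin m))
    (hJ : ‖J - 1‖ ≤ 1 / 2)
    (z h : EuclideanSpace ℝ (Fin m))
    (hh : ‖h‖ ≤ C₃) (hz : max (C₃ + 1) (4 * C₃) ≤ ‖z‖) :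
    ⟪z, J (b (z + h))⟫ ≤ (4 * C₁ + 3 * C₂) * ‖z‖ ^ 2 := by
  obtain ⟨hz₁, hz₄⟩ := max_le_iff.mp hz
  have hC₁ : 0 ≤ C₁ := by simpa using hb1 0
  set w := z + h
  have hw_lower : 1 ≤ ‖w‖ := by linarith [norm_sub_le_norm_add z h]
  have hw_upper : ‖w‖ ≤ ‖z‖ + ‖h‖ := norm_add_le z h
  set α := ⟪b w, w⟫ / ‖w‖ ^ 2
  set t := b w - α • w
  have hα : α ≤ 2 * C₁ := div_le_two_mul_of_le_mul_one_add (hb1 w) hC₁ (one_le_pow₀ hw_lower)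
  have ht : ‖t‖ ≤ C₂ * (1 + ‖w‖) := hb2 w (norm_pos_iff.mp (by linarith))
  have hC₂ : 0 ≤ C₂ := nonneg_of_mul_nonneg_left ((norm_nonneg t).trans ht) (by positivity)
  have hradial_nonneg : 0 ≤ ⟪z, J w⟫ :=
    inner_apply_add_nonneg_of_norm_sub_one_le hJ (by linarith [norm_nonneg h])
  have hradial_le : α * ⟪z, J w⟫ ≤ 4 * C₁ * ‖z‖ ^ 2 :=
    calc α * ⟪z, J w⟫ ≤ 2 * C₁ * ((1 + 1 / 2) * (‖z‖ * ‖w‖)) := by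
          gcongr; exact inner_apply_le_of_norm_sub_one_le hJ z w
      _ ≤ 2 * C₁ * ((1 + 1 / 2) * (‖z‖ * (5 / 4 * ‖z‖))) := by gcongr; linarith
      _ ≤ 4 * C₁ * ‖z‖ ^ 2 := by nlinarith [mul_nonneg hC₁ (sq_nonneg ‖z‖)]
  have htangential_le : ⟪z, J t⟫ ≤ 3 * C₂ * ‖z‖ ^ 2 :=
    calc ⟪z, J t⟫ ≤ (1 + 1 / 2) * (‖z‖ * ‖t‖) := inner_apply_le_of_norm_sub_one_le hJ z t
      _ ≤ (1 + 1 / 2) * (‖z‖ * (C₂ * (1 + ‖w‖))) := by gcongr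
      _ ≤ (1 + 1 / 2) * (‖z‖ * (C₂ * (2 * ‖z‖))) := by gcongr; linarith
      _ = 3 * C₂ * ‖z‖ ^ 2 := by ring
  rw [← add_sub_cancel (α • w) (b w), map_add, map_smul, inner_add_right, inner_smul_right]
  linarith

theorem drift_radial_tangential_bound {m : ℕ} (C₁ C₂ C₃ : ℝ)
    (hC₁ : 0 ≤ C₁) (hC₂ : 0 ≤ C₂) (hC₃ : 0 ≤ C₃)
    (b : EuclideanSpace ℝ (Fin m) → EuclideanSpace ℝ (Fin m))
    (hb1 : ∀ ξ, ⟪b ξ, ξ⟫ ≤ C₁ * (1 + ‖ξ‖ ^ 2))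
    (hb2 : ∀ ξ, ξ ≠ 0 → ‖b ξ - (⟪b ξ, ξ⟫ / ‖ξ‖ ^ 2) • ξ‖ ≤ C₂ * (1 + ‖ξ‖))
    (J : EuclideanSpace ℝ (Fin m) →L[ℝ] EuclideanSpace ℝ (Fin m))
    (hJ : ‖J - 1‖ ≤ 1 / 2)
    (z h : EuclideanSpace ℝ (Fin m))
    (hh : ‖h‖ ≤ C₃) (hz : max (C₃ + 1) (4 * C₃) ≤ ‖z‖) :
    ⟪z, J (b (z + h))⟫ ≤ (4 * C₁ + 3 * C₂) * ‖z‖ ^ 2 :=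
  drift_radial_tangential_bound_general C₁ C₂ C₃ b hb1 hb2 J hJ z h hh hz
end

section
/- Let z : [0,T] → ℝ^m be differentiable with ż_t = J(t, z_t) b(ψ(t, z_t)), where b : ℝ^m → ℝ^m is continuous with ⟨b(ξ), ξ⟩ ≤ C₁(1 + |ξ|²) for all ξ and |b(ξ) − ⟨b(ξ),ξ⟩ξ/|ξ|²| ≤ C₂(1 + |ξ|) for ξ ≠ 0; J : [0,T] × ℝ^m → ℝ^{m×m} is continuous with sup_{t,ξ} |J(t,ξ) − I| ≤ 1/2; and ψ : [0,T] × ℝ^m → ℝ^m is continuous with sup_{t,ξ} |ψ(t,ξ) − ξ| ≤ C₃. Then there is a constant C, depending only on C₁, C₂, C₃ and on C₄ := sup{|b(ξ)| : |ξ| ≤ (2C₃+1)∨(5C₃) + 1}, such that sup_{t∈[0,T]} |z_t| ≤ (C T + |z_0|) e^{C T}. -/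
/-!
Write the velocity as `A v` with `A = J(t, z)`, `w = ψ(t, z)`, `v = b(w)`. On a ball around
the origin `‖v‖ ≤ C₄`. Far out, `‖A - 1‖ ≤ 1/2` and `‖w - z‖ ≤ C₃` force `⟪A w, z⟫ ≥ 0`, so
the radial part `ρ w` of `v` contributes `ρ ⟪A w, z⟫ ≤ 2 C₁ ⟪A w, z⟫`: the radial growth of `b`
is only bounded from above, and a large inward component can only help. With the tangential
bound this gives `⟪ż, z⟫ ≤ K (1 + ‖z‖) ‖z‖`. Then `√(δ² + ‖z‖²)` grows at rate at most
`K (· + 1)`, and Grönwall with `δ → 0` yields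
`‖z t‖ ≤ ‖z 0‖ e^{Kt} + e^{Kt} - 1 ≤ (K t + ‖z 0‖) e^{Kt}`.
-/

open Set
open scoped RealInnerProductSpace

open Filter Real
open scoped Topology

theorem gronwallBound_continuous_δ (K ε x : ℝ) : Continuous fun δ => gronwallBound δ K ε x := by
  by_cases hK : K = 0
  · simp only [gronwallBound_K0, hK]
    fun_prop
  · simp only [gronwallBound_of_K_ne_0 hK]
    fun_prop

lemma exp_sub_one_le_mul_exp (s : ℝ) : exp s - 1 ≤ s * exp s := by
  have h := mul_le_mul_of_nonneg_right (add_one_le_exp (-s)) (exp_pos s).le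
  rw [← exp_add, neg_add_cancel, exp_zero] at h
  linarith

theorem gronwallBound_le_mul_exp (δ K x : ℝ) :
    gronwallBound δ K K x ≤ (K * x + δ) * exp (K * x) := by
  by_cases hK : K = 0
  · simp [gronwallBound_K0, hK]
  · rw [gronwallBound_of_K_ne_0 hK, div_self hK]
    linarith [exp_sub_one_le_mul_exp (K * x)]

section InnerProductSpace

variable {E : Type*} [NormedAddCommGroup E] [InnerProductSpace ℝ E]

theorem norm_le_gronwallBound_add_of_inner_deriv_le {z z' : ℝ → E} {K δ a b : ℝ} (hK : 0 ≤ K)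
    (hδ : 0 < δ) (hz : ContinuousOn z (Icc a b))
    (hz' : ∀ s ∈ Ico a b, HasDerivWithinAt z (z' s) (Ici s) s)
    (bound : ∀ s ∈ Ico a b, ⟪z' s, z s⟫ ≤ K * (1 + ‖z s‖) * ‖z s‖) :
    ∀ t ∈ Icc a b, ‖z t‖ ≤ gronwallBound (‖z a‖ + δ) K K (t - a) := by
  -- `‖z‖` need not be differentiable where `z` vanishes; `√(δ² + ‖z‖²)` is.
  set f : ℝ → ℝ := fun s => √(δ ^ 2 + ‖z s‖ ^ 2)
  have hsq_pos : ∀ s, 0 < δ ^ 2 + ‖z s‖ ^ 2 := fun s => by positivity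
  have hf_pos : ∀ s, 0 < f s := fun s => sqrt_pos.2 (hsq_pos s)
  have norm_le_f : ∀ s, ‖z s‖ ≤ f s := fun s =>
    le_sqrt_of_sq_le (le_add_of_nonneg_left (sq_nonneg δ))
  have hf' : ∀ s ∈ Ico a b,
      HasDerivWithinAt f (2 * ⟪z s, z' s⟫ / (2 * f s)) (Ici s) s := fun s hs =>
    (((hz' s hs).norm_sq).const_add (δ ^ 2)).sqrt (hsq_pos s).ne'
  have f_cont : ContinuousOn f (Icc a b) :=
    (continuousOn_const.add (hz.norm.pow 2)).sqrt
  have f_a : f a ≤ ‖z a‖ + δ := by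
    refine sqrt_le_iff.2 ⟨by positivity, ?_⟩
    nlinarith [norm_nonneg (z a)]
  have f'_le : ∀ s ∈ Ico a b, 2 * ⟪z s, z' s⟫ / (2 * f s) ≤ K * f s + K := by
    intro s hs
    rw [real_inner_comm, mul_div_mul_left _ _ two_ne_zero, div_le_iff₀ (hf_pos s)]
    calc ⟪z' s, z s⟫ ≤ K * (1 + ‖z s‖) * ‖z s‖ := bound s hs
      _ ≤ K * (1 + f s) * f s := by gcongr <;> exact norm_le_f s
      _ = (K * f s + K) * f s := by ring
  intro t ht
  exact (norm_le_f t).trans <| le_gronwallBound_of_liminf_deriv_right_le f_cont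
    (fun s hs _ hr => (hf' s hs).liminf_right_slope_le hr) f_a f'_le t ht

theorem norm_le_gronwallBound_of_inner_deriv_le {z z' : ℝ → E} {K a b : ℝ} (hK : 0 ≤ K)
    (hz : ContinuousOn z (Icc a b))
    (hz' : ∀ s ∈ Ico a b, HasDerivWithinAt z (z' s) (Ici s) s)
    (bound : ∀ s ∈ Ico a b, ⟪z' s, z s⟫ ≤ K * (1 + ‖z s‖) * ‖z s‖) :
    ∀ t ∈ Icc a b, ‖z t‖ ≤ gronwallBound ‖z a‖ K K (t - a) := by
  intro t ht
  have hlim : Tendsto (fun δ => gronwallBound (‖z a‖ + δ) K K (t - a)) (𝓝[>] 0)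
      (𝓝 (gronwallBound ‖z a‖ K K (t - a))) := by
    have := ((gronwallBound_continuous_δ K K (t - a)).comp
      (continuous_const_add ‖z a‖)).tendsto' 0 (gronwallBound ‖z a‖ K K (t - a)) (by simp)
    exact this.mono_left nhdsWithin_le_nhds
  exact ge_of_tendsto hlim <| eventually_nhdsWithin_of_forall fun δ hδ =>
    norm_le_gronwallBound_add_of_inner_deriv_le hK hδ hz hz' bound t ht

lemma inner_div_norm_sq_le_two_mul {v w : E} {C : ℝ} (hC : 0 ≤ C)
    (hvw : ⟪v, w⟫ ≤ C * (1 + ‖w‖ ^ 2)) (hw : 1 ≤ ‖w‖) : ⟪v, w⟫ / ‖w‖ ^ 2 ≤ 2 * C := by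
  rw [div_le_iff₀ (by positivity)]
  nlinarith [one_le_pow₀ (n := 2) hw]

namespace ContinuousLinearMap

variable {A : E →L[ℝ] E}

lemma norm_apply_sub_self_le_half (hA : ‖A - 1‖ ≤ 1 / 2) (u : E) : ‖A u - u‖ ≤ ‖u‖ / 2 := by
  calc ‖A u - u‖ = ‖(A - 1) u‖ := rfl
    _ ≤ ‖A - 1‖ * ‖u‖ := (A - 1).le_opNorm u
    _ ≤ 1 / 2 * ‖u‖ := by gcongr
    _ = ‖u‖ / 2 := by ring

lemma inner_apply_le_of_norm_sub_one_le_half (hA : ‖A - 1‖ ≤ 1 / 2) (u x : E) :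
    ⟪A u, x⟫ ≤ 3 / 2 * ‖u‖ * ‖x‖ := by
  have hAu : ‖A u‖ ≤ 3 / 2 * ‖u‖ := by
    linarith [norm_le_norm_sub_add (A u) u, norm_apply_sub_self_le_half hA u]
  calc ⟪A u, x⟫ ≤ ‖A u‖ * ‖x‖ := real_inner_le_norm _ _
    _ ≤ 3 / 2 * ‖u‖ * ‖x‖ := by gcongr

lemma inner_apply_nonneg_of_norm_sub_le (hA : ‖A - 1‖ ≤ 1 / 2) {w x : E} {c : ℝ}
    (hwx : ‖w - x‖ ≤ c) (hx : 3 * c ≤ ‖x‖) : 0 ≤ ⟪A w, x⟫ := by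
  have hsplit : ⟪A w, x⟫ = ‖x‖ ^ 2 + ⟪w - x, x⟫ + ⟪A w - w, x⟫ := by
    rw [← real_inner_self_eq_norm_sq, ← inner_add_left, ← inner_add_left]
    congr 1
    abel
  have h₁ : -(c * ‖x‖) ≤ ⟪w - x, x⟫ := by
    have := neg_le_of_abs_le (abs_real_inner_le_norm (w - x) x)
    nlinarith [norm_nonneg x]
  have h₂ : -(‖w‖ / 2 * ‖x‖) ≤ ⟪A w - w, x⟫ := by
    have := neg_le_of_abs_le (abs_real_inner_le_norm (A w - w) x)
    nlinarith [norm_nonneg x, norm_apply_sub_self_le_half hA w]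
  have h₃ : ‖w‖ ≤ ‖x‖ + c := by linarith [norm_le_norm_sub_add w x]
  nlinarith [norm_nonneg x]

lemma inner_apply_le_of_radial_tangential_le (hA : ‖A - 1‖ ≤ 1 / 2) {C₁ C₂ : ℝ} (hC₁ : 0 ≤ C₁)
    {v w x : E} (hrad : ⟪v, w⟫ ≤ C₁ * (1 + ‖w‖ ^ 2))
    (htan : ‖v - (⟪v, w⟫ / ‖w‖ ^ 2) • w‖ ≤ C₂ * (1 + ‖w‖)) (hw : 1 ≤ ‖w‖)
    (hAwx : 0 ≤ ⟪A w, x⟫) : ⟪A v, x⟫ ≤ 3 / 2 * (2 * C₁ + C₂) * (1 + ‖w‖) * ‖x‖ := by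
  set ρ := ⟪v, w⟫ / ‖w‖ ^ 2
  have hsplit : ⟪A v, x⟫ = ρ * ⟪A w, x⟫ + ⟪A (v - ρ • w), x⟫ := by
    rw [map_sub, map_smul, inner_sub_left, real_inner_smul_left]
    ring
  have hradial : ρ * ⟪A w, x⟫ ≤ 2 * C₁ * (3 / 2 * ‖w‖ * ‖x‖) :=
    mul_le_mul (inner_div_norm_sq_le_two_mul hC₁ hrad hw)
      (inner_apply_le_of_norm_sub_one_le_half hA w x) hAwx (by positivity)
  have htangential : ⟪A (v - ρ • w), x⟫ ≤ 3 / 2 * (C₂ * (1 + ‖w‖)) * ‖x‖ :=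
    (inner_apply_le_of_norm_sub_one_le_half hA _ x).trans (by gcongr)
  rw [hsplit]
  nlinarith [mul_nonneg hC₁ (norm_nonneg x)]

lemma inner_apply_le_of_drift_bounds (hA : ‖A - 1‖ ≤ 1 / 2) {C₁ C₂ C₃ C₄ R : ℝ} (hC₁ : 0 ≤ C₁)
    (hC₂ : 0 ≤ C₂) (hC₄ : 0 ≤ C₄) (hR : 4 * C₃ + 1 ≤ R) {v w x : E}
    (hrad : ⟪v, w⟫ ≤ C₁ * (1 + ‖w‖ ^ 2))
    (htan : w ≠ 0 → ‖v - (⟪v, w⟫ / ‖w‖ ^ 2) • w‖ ≤ C₂ * (1 + ‖w‖))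
    (hloc : ‖w‖ ≤ R → ‖v‖ ≤ C₄) (hwx : ‖w - x‖ ≤ C₃) :
    ⟪A v, x⟫ ≤ 3 / 2 * ((2 * C₁ + C₂) * (1 + C₃) + C₄) * (1 + ‖x‖) * ‖x‖ := by
  have hC₃ : 0 ≤ C₃ := (norm_nonneg _).trans hwx
  have hF : 0 ≤ (2 * C₁ + C₂) * (1 + C₃) := by positivity
  have hx : ‖x‖ ≤ (1 + ‖x‖) * ‖x‖ := by nlinarith [norm_nonneg x]
  rcases le_or_gt ‖w‖ R with hw | hw
  · have hv := inner_apply_le_of_norm_sub_one_le_half hA v x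
    have hC₄x : ‖v‖ * ‖x‖ ≤ C₄ * ((1 + ‖x‖) * ‖x‖) :=
      mul_le_mul (hloc hw) hx (norm_nonneg x) hC₄
    nlinarith [mul_nonneg hF (mul_nonneg (by positivity : (0 : ℝ) ≤ 1 + ‖x‖) (norm_nonneg x))]
  · have hw_le : ‖w‖ ≤ ‖x‖ + C₃ := by linarith [norm_le_norm_sub_add w x]
    have hAwx : 0 ≤ ⟪A w, x⟫ := inner_apply_nonneg_of_norm_sub_le hA hwx (by linarith)
    calc ⟪A v, x⟫ ≤ 3 / 2 * (2 * C₁ + C₂) * (1 + ‖w‖) * ‖x‖ :=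
          inner_apply_le_of_radial_tangential_le hA hC₁ hrad
            (htan (norm_pos_iff.1 (by linarith))) (by linarith) hAwx
      _ ≤ 3 / 2 * (2 * C₁ + C₂) * ((1 + C₃) * (1 + ‖x‖)) * ‖x‖ := by
        gcongr
        nlinarith [mul_nonneg hC₃ (norm_nonneg x)]
      _ ≤ 3 / 2 * ((2 * C₁ + C₂) * (1 + C₃) + C₄) * (1 + ‖x‖) * ‖x‖ := by
        rw [← mul_assoc, mul_assoc (3 / 2) (2 * C₁ + C₂)]
        gcongr
        linarith

end ContinuousLinearMap

end InnerProductSpace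

/-- A priori sup-norm estimate for solutions of `ż = J(t,z) b(ψ(t,z))` under one-sided
radial growth and linear tangential growth of the drift `b`. -/
theorem apriori_sup_bound (C₁ C₂ C₃ C₄ : ℝ)
    (hC₁ : 0 ≤ C₁) (hC₂ : 0 ≤ C₂) (hC₃ : 0 ≤ C₃) (hC₄ : 0 ≤ C₄) :
    ∃ C : ℝ, 0 ≤ C ∧
      ∀ (m : ℕ) (T : ℝ), 0 < T →
      ∀ (b : EuclideanSpace ℝ (Fin m) → EuclideanSpace ℝ (Fin m))
        (J : ℝ → EuclideanSpace ℝ (Fin m) →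
          (EuclideanSpace ℝ (Fin m) →L[ℝ] EuclideanSpace ℝ (Fin m)))
        (ψ : ℝ → EuclideanSpace ℝ (Fin m) → EuclideanSpace ℝ (Fin m))
        (z : ℝ → EuclideanSpace ℝ (Fin m)),
        Continuous b →
        (∀ ξ, ⟪b ξ, ξ⟫ ≤ C₁ * (1 + ‖ξ‖ ^ 2)) →
        (∀ ξ, ξ ≠ 0 → ‖b ξ - (⟪b ξ, ξ⟫ / ‖ξ‖ ^ 2) • ξ‖ ≤ C₂ * (1 + ‖ξ‖)) →
        (∀ ξ, ‖ξ‖ ≤ max (2 * C₃ + 1) (5 * C₃) + 1 → ‖b ξ‖ ≤ C₄) →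
        Continuous (fun p : ℝ × EuclideanSpace ℝ (Fin m) => J p.1 p.2) →
        (∀ t ∈ Icc (0 : ℝ) T, ∀ ξ, ‖J t ξ - 1‖ ≤ 1 / 2) →
        Continuous (fun p : ℝ × EuclideanSpace ℝ (Fin m) => ψ p.1 p.2) →
        (∀ t ∈ Icc (0 : ℝ) T, ∀ ξ, ‖ψ t ξ - ξ‖ ≤ C₃) →
        (∀ t ∈ Icc (0 : ℝ) T, HasDerivAt z (J t (z t) (b (ψ t (z t)))) t) →
        ∀ t ∈ Icc (0 : ℝ) T, ‖z t‖ ≤ (C * T + ‖z 0‖) * Real.exp (C * T) := by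
  set K := 3 / 2 * ((2 * C₁ + C₂) * (1 + C₃) + C₄)
  have hK : 0 ≤ K := by positivity
  refine ⟨K, hK, fun m T _ b J ψ z _ hrad htan hloc _ hJ _ hψ hz t ht => ?_⟩
  have hR : 4 * C₃ + 1 ≤ max (2 * C₃ + 1) (5 * C₃) + 1 := by
    linarith [le_max_right (2 * C₃ + 1) (5 * C₃)]
  have hdrift : ∀ s ∈ Ico 0 T,
      ⟪J s (z s) (b (ψ s (z s))), z s⟫ ≤ K * (1 + ‖z s‖) * ‖z s‖ := fun s hs =>
    ContinuousLinearMap.inner_apply_le_of_drift_bounds (hJ s (Ico_subset_Icc_self hs) _)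
      hC₁ hC₂ hC₄ hR (hrad _) (htan _) (hloc _) (hψ s (Ico_subset_Icc_self hs) _)
  calc ‖z t‖ ≤ gronwallBound ‖z 0‖ K K (t - 0) :=
        norm_le_gronwallBound_of_inner_deriv_le hK
          (fun s hs => (hz s hs).continuousAt.continuousWithinAt)
          (fun s hs => (hz s (Ico_subset_Icc_self hs)).hasDerivWithinAt) hdrift t ht
    _ ≤ (K * t + ‖z 0‖) * exp (K * t) := by rw [sub_zero]; exact gronwallBound_le_mul_exp _ _ _
    _ ≤ (K * T + ‖z 0‖) * exp (K * T) := by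
        obtain ⟨ht₀, htT⟩ := ht
        have : 0 ≤ K * t := mul_nonneg hK ht₀
        gcongr
end

section
/- Let ψ : [0,T] × [0,T] × ℝ^m → ℝ^m be a continuously differentiable flow (i.e., ψ(t,t,ξ) = ξ and ψ(u,t,ψ(s,u,ξ)) = ψ(s,t,ξ) for all s,u,t,ξ, with ξ ↦ ψ(s,t,ξ) a diffeomorphism). Suppose for s ≤ u the function u ↦ χ_s(u,ξ) solves ż_u = (D_ξψ(s,u,ξ)|_{ξ=z_u})^{-1} b(ψ(s,u,z_u)) with χ_s(s,ξ) = ξ, and that b is locally Lipschitz so these ODEs have unique solutions. Define φ(s,t,ξ) = ψ(s,t,χ_s(t,ξ)). Then φ satisfies the semiflow property: φ(u,t,φ(s,u,ξ)) = φ(s,t,ξ) for all s ≤ u ≤ t and ξ ∈ ℝ^m. -/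
/-!
Let `z r = χ_s(r, ξ)`. Differentiating the flow identity `ψ(u,r,ψ(s,u,·)) = ψ(s,r,·)` gives
`D_ξψ(s,u,·) · J(s,r,·) = J(u,r,ψ(s,u,·))`, so `ψ(s,u,z_r)` solves the transformed ODE started at
time `u` from `ψ(s,u,χ_s(u,ξ))`. By uniqueness it coincides with `χ_u(·, ψ(s,u,χ_s(u,ξ)))`, and
applying `ψ(u,t,·)` together with the flow property yields the semiflow identity.
-/

open Set

theorem HasFDerivAt.comp_eq_of_comp_eq {𝕜 E F G : Type*} [NontriviallyNormedField 𝕜]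
    [NormedAddCommGroup E] [NormedSpace 𝕜 E] [NormedAddCommGroup F] [NormedSpace 𝕜 F]
    [NormedAddCommGroup G] [NormedSpace 𝕜 G] {f : E → F} {g : F → G} {h : E → G}
    {A : E →L[𝕜] F} {B : F →L[𝕜] G} {C : E →L[𝕜] G} {x : E}
    (hf : HasFDerivAt f A x) (hg : HasFDerivAt g B (f x)) (hh : HasFDerivAt h C x)
    (hgf : g ∘ f = h) : B.comp A = C :=
  (hgf ▸ hg.comp x hf).unique hh

theorem mul_rightInv_eq_leftInv_of_mul_eq {M : Type*} [Monoid M] {a b c jb jc : M}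
    (hjb : jb * b = 1) (hjc : c * jc = 1) (hba : b * a = c) : a * jc = jb :=
  calc a * jc = jb * (b * a) * jc := by rw [← mul_assoc jb, hjb, one_mul]
    _ = jb := by rw [hba, mul_assoc, hjc, mul_one]

section TransformedODE

variable {E : Type*} [NormedAddCommGroup E] [NormedSpace ℝ E]

def SolvesTransformedODE (ψ : ℝ → ℝ → E → E) (J : ℝ → ℝ → E → E →L[ℝ] E) (b : E → E)
    (I : Set ℝ) (v : ℝ) (z : ℝ → E) : Prop :=
  ∀ r ∈ I, HasDerivAt z (J v r (z r) (b (ψ v r (z r)))) r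

variable {ψ : ℝ → ℝ → E → E} {D J : ℝ → ℝ → E → E →L[ℝ] E} {I : Set ℝ} {s u : ℝ}

theorem jacobian_comp_inverseJacobian_of_flow
    (hψ_flow : ∀ r ∈ I, ∀ x, ψ u r (ψ s u x) = ψ s r x)
    (hD : ∀ v ∈ I, ∀ r ∈ I, ∀ x, HasFDerivAt (ψ v r) (D v r x) x)
    (hJD : ∀ v ∈ I, ∀ r ∈ I, ∀ x, (J v r x).comp (D v r x) = 1 ∧ (D v r x).comp (J v r x) = 1)
    (hs : s ∈ I) (hu : u ∈ I) {r : ℝ} (hr : r ∈ I) (x : E) :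
    (D s u x).comp (J s r x) = J u r (ψ s u x) := by
  have hchain : (D u r (ψ s u x)).comp (D s u x) = D s r x :=
    (hD s hs u hu x).comp_eq_of_comp_eq (hD u hu r hr _) (hD s hs r hr x)
      (funext (hψ_flow r hr))
  exact mul_rightInv_eq_leftInv_of_mul_eq (hJD u hu r hr _).1 (hJD s hs r hr x).2 hchain

theorem SolvesTransformedODE.flow_comp {b : E → E} {z : ℝ → E}
    (hz : SolvesTransformedODE ψ J b I s z)
    (hψ_flow : ∀ r ∈ I, ∀ x, ψ u r (ψ s u x) = ψ s r x)
    (hD : ∀ v ∈ I, ∀ r ∈ I, ∀ x, HasFDerivAt (ψ v r) (D v r x) x)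
    (hJD : ∀ v ∈ I, ∀ r ∈ I, ∀ x, (J v r x).comp (D v r x) = 1 ∧ (D v r x).comp (J v r x) = 1)
    (hs : s ∈ I) (hu : u ∈ I) :
    SolvesTransformedODE ψ J b I u (ψ s u ∘ z) := by
  intro r hr
  have hderiv := (hD s hs u hu (z r)).comp_hasDerivAt r (hz r hr)
  rwa [Function.comp_apply, ← jacobian_comp_inverseJacobian_of_flow hψ_flow hD hJD hs hu hr,
    ContinuousLinearMap.comp_apply, hψ_flow r hr]

end TransformedODE

theorem semiflow_property_general {m : ℕ} (T : ℝ)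
    (ψ : ℝ → ℝ → EuclideanSpace ℝ (Fin m) → EuclideanSpace ℝ (Fin m))
    (D J : ℝ → ℝ → EuclideanSpace ℝ (Fin m) →
      (EuclideanSpace ℝ (Fin m) →L[ℝ] EuclideanSpace ℝ (Fin m)))
    (b : EuclideanSpace ℝ (Fin m) → EuclideanSpace ℝ (Fin m))
    (χ : ℝ → ℝ → EuclideanSpace ℝ (Fin m) → EuclideanSpace ℝ (Fin m))
    -- ψ is a flow:
    (hψ_flow : ∀ s ∈ Icc (0 : ℝ) T, ∀ u ∈ Icc (0 : ℝ) T, ∀ t ∈ Icc (0 : ℝ) T,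
      ∀ ξ, ψ u t (ψ s u ξ) = ψ s t ξ)
    -- continuously differentiable in space, with Jacobian D and inverse Jacobian J:
    (hD : ∀ s ∈ Icc (0 : ℝ) T, ∀ t ∈ Icc (0 : ℝ) T, ∀ ξ, HasFDerivAt (ψ s t) (D s t ξ) ξ)
    (hJD : ∀ s ∈ Icc (0 : ℝ) T, ∀ t ∈ Icc (0 : ℝ) T, ∀ ξ,
      (J s t ξ).comp (D s t ξ) = 1 ∧ (D s t ξ).comp (J s t ξ) = 1)
    -- χ_v solves the transformed ODE with initial condition ξ at time v:
    (hχ_init : ∀ v ∈ Icc (0 : ℝ) T, ∀ ξ, χ v v ξ = ξ)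
    (hχ_ode : ∀ v ∈ Icc (0 : ℝ) T, ∀ ξ, ∀ u ∈ Icc (0 : ℝ) T,
      HasDerivAt (fun r => χ v r ξ)
        (J v u (χ v u ξ) (b (ψ v u (χ v u ξ)))) u)
    -- the transformed ODEs have unique solutions:
    (huniq : ∀ v ∈ Icc (0 : ℝ) T, ∀ z₁ z₂ : ℝ → EuclideanSpace ℝ (Fin m),
      (∀ u ∈ Icc (0 : ℝ) T, HasDerivAt z₁ (J v u (z₁ u) (b (ψ v u (z₁ u)))) u) →
      (∀ u ∈ Icc (0 : ℝ) T, HasDerivAt z₂ (J v u (z₂ u) (b (ψ v u (z₂ u)))) u) →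
      z₁ v = z₂ v → ∀ u ∈ Icc (0 : ℝ) T, z₁ u = z₂ u) :
    ∀ s u t : ℝ, 0 ≤ s → s ≤ u → u ≤ t → t ≤ T → ∀ ξ,
      ψ u t (χ u t (ψ s u (χ s u ξ))) = ψ s t (χ s t ξ) := by
  intro s u t hs hsu hut htT ξ
  have hsI : s ∈ Icc (0 : ℝ) T := ⟨hs, hsu.trans (hut.trans htT)⟩
  have huI : u ∈ Icc (0 : ℝ) T := ⟨hs.trans hsu, hut.trans htT⟩
  have htI : t ∈ Icc (0 : ℝ) T := ⟨(hs.trans hsu).trans hut, htT⟩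
  have htransported : SolvesTransformedODE ψ J b (Icc 0 T) u (ψ s u ∘ fun r => χ s r ξ) :=
    SolvesTransformedODE.flow_comp (hχ_ode s hsI ξ) (hψ_flow s hsI u huI) hD hJD hsI huI
  have hsame : χ u t (ψ s u (χ s u ξ)) = ψ s u (χ s t ξ) :=
    huniq u huI _ _ (hχ_ode u huI _) htransported (hχ_init u huI _) t htI
  rw [hsame, hψ_flow s hsI u huI t htI]

/-- The composition `φ(s,t,ξ) = ψ(s,t,χ_s(t,ξ))` of the driftless flow `ψ` with the
solution `χ` of the transformed drift ODE satisfies the semiflow property. -/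
theorem semiflow_property {m : ℕ} (T : ℝ) (hT : 0 < T)
    (ψ : ℝ → ℝ → EuclideanSpace ℝ (Fin m) → EuclideanSpace ℝ (Fin m))
    (D J : ℝ → ℝ → EuclideanSpace ℝ (Fin m) →
      (EuclideanSpace ℝ (Fin m) →L[ℝ] EuclideanSpace ℝ (Fin m)))
    (b : EuclideanSpace ℝ (Fin m) → EuclideanSpace ℝ (Fin m))
    (χ : ℝ → ℝ → EuclideanSpace ℝ (Fin m) → EuclideanSpace ℝ (Fin m))
    -- ψ is a flow:
    (hψ_id : ∀ t ∈ Icc (0 : ℝ) T, ∀ ξ, ψ t t ξ = ξ)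
    (hψ_flow : ∀ s ∈ Icc (0 : ℝ) T, ∀ u ∈ Icc (0 : ℝ) T, ∀ t ∈ Icc (0 : ℝ) T,
      ∀ ξ, ψ u t (ψ s u ξ) = ψ s t ξ)
    -- continuously differentiable in space, with Jacobian D and inverse Jacobian J:
    (hD : ∀ s ∈ Icc (0 : ℝ) T, ∀ t ∈ Icc (0 : ℝ) T, ∀ ξ, HasFDerivAt (ψ s t) (D s t ξ) ξ)
    (hDcont : ∀ s ∈ Icc (0 : ℝ) T, ∀ t ∈ Icc (0 : ℝ) T,
      Continuous (fun ξ => D s t ξ))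
    (hJD : ∀ s ∈ Icc (0 : ℝ) T, ∀ t ∈ Icc (0 : ℝ) T, ∀ ξ,
      (J s t ξ).comp (D s t ξ) = 1 ∧ (D s t ξ).comp (J s t ξ) = 1)
    -- b is locally Lipschitz:
    (hb : LocallyLipschitz b)
    -- χ_v solves the transformed ODE with initial condition ξ at time v:
    (hχ_init : ∀ v ∈ Icc (0 : ℝ) T, ∀ ξ, χ v v ξ = ξ)
    (hχ_ode : ∀ v ∈ Icc (0 : ℝ) T, ∀ ξ, ∀ u ∈ Icc (0 : ℝ) T,
      HasDerivAt (fun r => χ v r ξ)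
        (J v u (χ v u ξ) (b (ψ v u (χ v u ξ)))) u)
    -- the transformed ODEs have unique solutions:
    (huniq : ∀ v ∈ Icc (0 : ℝ) T, ∀ z₁ z₂ : ℝ → EuclideanSpace ℝ (Fin m),
      (∀ u ∈ Icc (0 : ℝ) T, HasDerivAt z₁ (J v u (z₁ u) (b (ψ v u (z₁ u)))) u) →
      (∀ u ∈ Icc (0 : ℝ) T, HasDerivAt z₂ (J v u (z₂ u) (b (ψ v u (z₂ u)))) u) →
      z₁ v = z₂ v → ∀ u ∈ Icc (0 : ℝ) T, z₁ u = z₂ u) :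
    ∀ s u t : ℝ, 0 ≤ s → s ≤ u → u ≤ t → t ≤ T → ∀ ξ,
      ψ u t (χ u t (ψ s u (χ s u ξ))) = ψ s t (χ s t ξ) :=
  semiflow_property_general T ψ D J b χ hψ_flow hD hJD hχ_init hχ_ode huniq
end

section
/- Let ω, ω' be control functions on [0,T] and set ω̃ = ω + ω' (which is again a control function). Then for any δ > 0, N_δ(ω̃) ≤ 2N_δ(ω) + 2N_δ(ω') + 2, where N_δ is defined via the greedy stopping-time sequence τ₀ = 0, τ_{n+1} = inf{u ∈ (τ_n, T] : ω̃(τ_n, u) ≥ δ} ∧ T, N_δ(ω̃) = sup{n : τ_n < T}. -/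
/-!
Let `τ` be the greedy sequence of `ω + ω'` and `N = N_δ(ω + ω')`. Each of the `N` steps
`[τ k, τ (k + 1)]` gains `δ` for `ω + ω'`, hence at least `δ / 2` for `ω` or for `ω'`.
By superadditivity and nonnegativity, two consecutive `δ / 2`-steps for `ω` (with anything in
between) span an interval on which `ω` gains `δ`, and the greedy sequence of `ω` has passed the
`j`-th interval of any chain of such intervals after `j` steps; so at most `2 N_δ(ω) + 1` of the
steps are `δ / 2`-steps for `ω`, and likewise for `ω'`.
-/

open Set

/-- The greedy stopping-time sequence associated to a control `ω`, threshold `δ`,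
on the interval `[0,T]`. -/
noncomputable def tauSeq (T : ℝ) (ω : ℝ → ℝ → ℝ) (δ : ℝ) : ℕ → ℝ
  | 0 => 0
  | n + 1 =>
      sInf ({u : ℝ | tauSeq T ω δ n < u ∧ u ≤ T ∧ δ ≤ ω (tauSeq T ω δ n) u} ∪ {T})

/-- `N_δ(ω) = sup{n : τ_n < T}`. -/
noncomputable def Ncount (T : ℝ) (ω : ℝ → ℝ → ℝ) (δ : ℝ) : ℕ :=
  sSup {n : ℕ | tauSeq T ω δ n < T}

def ControlNonneg (T : ℝ) (ω : ℝ → ℝ → ℝ) : Prop :=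
  ∀ s t, 0 ≤ s → s ≤ t → t ≤ T → 0 ≤ ω s t

def ControlSuperadditive (T : ℝ) (ω : ℝ → ℝ → ℝ) : Prop :=
  ∀ s t u, 0 ≤ s → s ≤ t → t ≤ u → u ≤ T → ω s t + ω t u ≤ ω s u

def ControlContinuous (T : ℝ) (ω : ℝ → ℝ → ℝ) : Prop :=
  ContinuousOn (fun p : ℝ × ℝ => ω p.1 p.2) {p : ℝ × ℝ | 0 ≤ p.1 ∧ p.1 ≤ p.2 ∧ p.2 ≤ T}

section Control

variable {T : ℝ} {ω : ℝ → ℝ → ℝ} {s t u : ℝ}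

theorem ControlSuperadditive.apply_self_nonpos (hsuper : ControlSuperadditive T ω)
    (hs : 0 ≤ s) (hsT : s ≤ T) : ω s s ≤ 0 := by
  linarith [hsuper s s s hs le_rfl le_rfl hsT]

theorem ControlSuperadditive.apply_le_apply_right (hsuper : ControlSuperadditive T ω)
    (hnonneg : ControlNonneg T ω) (hs : 0 ≤ s) (hst : s ≤ t) (htu : t ≤ u) (huT : u ≤ T) :
    ω s t ≤ ω s u := by
  linarith [hsuper s t u hs hst htu huT, hnonneg t u (hs.trans hst) htu huT]

theorem ControlSuperadditive.apply_le_apply_left (hsuper : ControlSuperadditive T ω)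
    (hnonneg : ControlNonneg T ω) (hs : 0 ≤ s) (hst : s ≤ t) (htu : t ≤ u) (huT : u ≤ T) :
    ω t u ≤ ω s u := by
  linarith [hsuper s t u hs hst htu huT, hnonneg s t hs hst (htu.trans huT)]

end Control

def stepSet (T : ℝ) (ω : ℝ → ℝ → ℝ) (δ x : ℝ) : Set ℝ :=
  {u | x < u ∧ u ≤ T ∧ δ ≤ ω x u}

section Greedy

variable {T δ : ℝ} {ω : ℝ → ℝ → ℝ}

theorem tauSeq_succ (n : ℕ) :
    tauSeq T ω δ (n + 1) = sInf (stepSet T ω δ (tauSeq T ω δ n) ∪ {T}) := rfl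

theorem bddBelow_stepSet_union (x : ℝ) : BddBelow (stepSet T ω δ x ∪ {T}) :=
  (bddBelow_Ioi.mono fun _ hu => hu.1).union bddBelow_singleton

theorem sInf_stepSet_union_mem_Icc {x : ℝ} (hxT : x ≤ T) :
    sInf (stepSet T ω δ x ∪ {T}) ∈ Icc x T := by
  have hlb : ∀ u ∈ stepSet T ω δ x ∪ {T}, x ≤ u := by
    rintro u (hu | rfl)
    exacts [hu.1.le, hxT]
  exact ⟨le_csInf ⟨T, Or.inr rfl⟩ hlb, csInf_le (bddBelow_stepSet_union x) (Or.inr rfl)⟩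

theorem tauSeq_mem_Icc (hT : 0 ≤ T) (n : ℕ) : tauSeq T ω δ n ∈ Icc 0 T := by
  induction n with
  | zero => exact ⟨le_rfl, hT⟩
  | succ n ih =>
    have h := sInf_stepSet_union_mem_Icc (ω := ω) (δ := δ) ih.2
    rw [← tauSeq_succ] at h
    exact ⟨ih.1.trans h.1, h.2⟩

theorem monotone_tauSeq (hT : 0 ≤ T) : Monotone (tauSeq T ω δ) :=
  monotone_nat_of_le_succ fun n => (sInf_stepSet_union_mem_Icc (tauSeq_mem_Icc hT n).2).1

theorem tauSeq_succ_le (hT : 0 ≤ T) (hδ : 0 < δ) (hnonneg : ControlNonneg T ω)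
    (hsuper : ControlSuperadditive T ω) {n : ℕ} {s t : ℝ} (hs : tauSeq T ω δ n ≤ s)
    (hst : s ≤ t) (htT : t ≤ T) (hδst : δ ≤ ω s t) : tauSeq T ω δ (n + 1) ≤ t := by
  obtain ⟨hn0, -⟩ := tauSeq_mem_Icc (ω := ω) (δ := δ) hT n
  have hlt : tauSeq T ω δ n < t := by
    refine lt_of_le_of_ne (hs.trans hst) fun hnt => ?_
    obtain rfl : s = t := le_antisymm hst (hnt ▸ hs)
    linarith [hsuper.apply_self_nonpos (hn0.trans hs) htT]
  have hδt : δ ≤ ω (tauSeq T ω δ n) t :=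
    hδst.trans (hsuper.apply_le_apply_left hnonneg hn0 hs hst htT)
  rw [tauSeq_succ]
  exact csInf_le (bddBelow_stepSet_union _) (Or.inl ⟨hlt, htT, hδt⟩)

theorem le_apply_tauSeq_succ (hT : 0 ≤ T) (hcont : ControlContinuous T ω) {n : ℕ}
    (hlt : tauSeq T ω δ (n + 1) < T) : δ ≤ ω (tauSeq T ω δ n) (tauSeq T ω δ (n + 1)) := by
  unfold ControlContinuous at hcont
  rw [tauSeq_succ] at hlt ⊢
  set x := tauSeq T ω δ n
  obtain ⟨hx0, -⟩ := tauSeq_mem_Icc (ω := ω) (δ := δ) hT n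
  have hclosed : IsClosed (Icc x T ∩ (fun u => ω x u) ⁻¹' Ici δ) := by
    refine ContinuousOn.preimage_isClosed_of_isClosed ?_ isClosed_Icc isClosed_Ici
    exact hcont.comp (Continuous.continuousOn (f := fun u : ℝ => (x, u)) (by fun_prop))
      fun u hu => ⟨hx0, hu.1, hu.2⟩
  have hmem := csInf_mem_closure ⟨T, Or.inr rfl⟩ (bddBelow_stepSet_union (ω := ω) (δ := δ) x)
  rw [closure_union, closure_singleton] at hmem
  rcases hmem with hS | hT'
  · have hsub : stepSet T ω δ x ⊆ Icc x T ∩ (fun u => ω x u) ⁻¹' Ici δ :=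
      fun _ hu => ⟨⟨hu.1.le, hu.2.1⟩, hu.2.2⟩
    exact (closure_minimal hsub hclosed hS).2
  · exact absurd hT' hlt.ne

theorem mul_le_apply_zero_tauSeq (hT : 0 ≤ T) (hnonneg : ControlNonneg T ω)
    (hsuper : ControlSuperadditive T ω) (hcont : ControlContinuous T ω)
    {n : ℕ} (hlt : tauSeq T ω δ n < T) : δ * n ≤ ω 0 (tauSeq T ω δ n) := by
  induction n with
  | zero => simpa [tauSeq] using hnonneg 0 0 le_rfl le_rfl hT
  | succ n ih =>
    have hle := monotone_tauSeq (ω := ω) (δ := δ) hT n.le_succ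
    have hstep := hsuper 0 _ _ le_rfl (tauSeq_mem_Icc hT n).1 hle hlt.le
    push_cast
    linarith [ih (hle.trans_lt hlt), le_apply_tauSeq_succ hT hcont hlt]

theorem le_Ncount (hT : 0 ≤ T) (hδ : 0 < δ) (hnonneg : ControlNonneg T ω)
    (hsuper : ControlSuperadditive T ω) (hcont : ControlContinuous T ω)
    {m : ℕ} (hm : tauSeq T ω δ m < T) : m ≤ Ncount T ω δ := by
  refine le_csSup ⟨⌈ω 0 T / δ⌉₊, fun n hn => ?_⟩ hm
  have hmono := hsuper.apply_le_apply_right hnonneg le_rfl (tauSeq_mem_Icc hT n).1 hn.le le_rfl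
  have hn : (n : ℝ) ≤ ω 0 T / δ := by
    rw [le_div_iff₀ hδ, mul_comm]
    exact (mul_le_apply_zero_tauSeq hT hnonneg hsuper hcont hn).trans hmono
  exact_mod_cast hn.trans (Nat.le_ceil _)

theorem Ncount_eq_zero_or_tauSeq_Ncount_lt :
    Ncount T ω δ = 0 ∨ tauSeq T ω δ (Ncount T ω δ) < T := by
  by_cases h : {n | tauSeq T ω δ n < T}.Nonempty ∧ BddAbove {n | tauSeq T ω δ n < T}
  · exact Or.inr (Nat.sSup_mem h.1 h.2)
  · left
    rcases not_and_or.mp h with hne | hbdd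
    · rw [Ncount, not_nonempty_iff_eq_empty.mp hne, csSup_empty]; rfl
    · exact Nat.sSup_of_not_bddAbove hbdd

end Greedy

theorem Nat.le_count_add_count {p q : ℕ → Prop} [DecidablePred p] [DecidablePred q] {n : ℕ}
    (h : ∀ k < n, p k ∨ q k) : n ≤ Nat.count p n + Nat.count q n := by
  induction n with
  | zero => exact le_rfl
  | succ n ih =>
    rw [Nat.count_succ, Nat.count_succ]
    have := ih fun k hk => h k (hk.trans n.lt_succ_self)
    rcases h n n.lt_succ_self with hp | hq <;> split_ifs <;> omega

section Comparison

variable {T δ : ℝ} {ω : ℝ → ℝ → ℝ} {τ : ℕ → ℝ}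

/- Consecutive `δ / 2`-steps of `τ` are paired into `δ`-intervals for `ω`; while a step is still
unpaired, `s` is its left end. -/
theorem exists_tauSeq_count_div_two_le (hT : 0 ≤ T) (hδ : 0 < δ) (hnonneg : ControlNonneg T ω)
    (hsuper : ControlSuperadditive T ω) (hτ : Monotone τ) (hτ0 : 0 ≤ τ 0) (hτT : ∀ n, τ n ≤ T)
    (n : ℕ) :
    ∃ s, tauSeq T ω δ (Nat.count (fun k => δ / 2 ≤ ω (τ k) (τ (k + 1))) n / 2) ≤ s ∧ s ≤ τ n ∧
      (Odd (Nat.count (fun k => δ / 2 ≤ ω (τ k) (τ (k + 1))) n) → δ / 2 ≤ ω s (τ n)) := by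
  induction n with
  | zero => exact ⟨τ 0, by simpa [tauSeq] using hτ0, le_rfl, by simp⟩
  | succ n ih =>
    obtain ⟨s, hσs, hsn, hodd⟩ := ih
    set c := Nat.count (fun k => δ / 2 ≤ ω (τ k) (τ (k + 1))) n
    have hs0 : 0 ≤ s := (tauSeq_mem_Icc hT _).1.trans hσs
    have hnn : τ n ≤ τ (n + 1) := hτ n.le_succ
    rw [Nat.count_succ]
    by_cases hP : δ / 2 ≤ ω (τ n) (τ (n + 1))
    · rw [if_pos hP]
      rcases Nat.even_or_odd c with ⟨r, hr⟩ | ho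
      · refine ⟨τ n, ?_, hnn, fun _ => hP⟩
        rw [show (c + 1) / 2 = c / 2 by omega]
        exact hσs.trans hsn
      · have hgain : δ ≤ ω s (τ (n + 1)) := by
          linarith [hodd ho, hsuper s (τ n) (τ (n + 1)) hs0 hsn hnn (hτT _)]
        refine ⟨τ (n + 1), ?_, le_rfl,
          fun ho' => absurd ho' (Nat.not_odd_iff_even.mpr ho.add_one)⟩
        obtain ⟨r, hr⟩ := ho
        rw [show (c + 1) / 2 = c / 2 + 1 by omega]
        exact tauSeq_succ_le hT hδ hnonneg hsuper hσs (hsn.trans hnn) (hτT _) hgain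
    · rw [if_neg hP, add_zero]
      exact ⟨s, hσs, hsn.trans hnn, fun ho =>
        (hodd ho).trans (hsuper.apply_le_apply_right hnonneg hs0 hsn hnn (hτT _))⟩

theorem count_le_two_mul_Ncount_add_one (hT : 0 ≤ T) (hδ : 0 < δ)
    (hnonneg : ControlNonneg T ω) (hsuper : ControlSuperadditive T ω)
    (hcont : ControlContinuous T ω) (hτ : Monotone τ) (hτ0 : 0 ≤ τ 0) (hτT : ∀ n, τ n ≤ T)
    {N : ℕ} (hN : τ N < T) :
    Nat.count (fun k => δ / 2 ≤ ω (τ k) (τ (k + 1))) N ≤ 2 * Ncount T ω δ + 1 := by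
  obtain ⟨s, hσs, hsN, -⟩ := exists_tauSeq_count_div_two_le hT hδ hnonneg hsuper hτ hτ0 hτT N
  have := le_Ncount hT hδ hnonneg hsuper hcont ((hσs.trans hsN).trans_lt hN)
  omega

end Comparison

theorem Ncount_add_le_general (T δ : ℝ) (hT : 0 ≤ T) (hδ : 0 < δ) (ω ω' : ℝ → ℝ → ℝ)
    (hnonneg : ∀ s t, 0 ≤ s → s ≤ t → t ≤ T → 0 ≤ ω s t)
    (hnonneg' : ∀ s t, 0 ≤ s → s ≤ t → t ≤ T → 0 ≤ ω' s t)
    (hsuper : ∀ s t u, 0 ≤ s → s ≤ t → t ≤ u → u ≤ T → ω s t + ω t u ≤ ω s u)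
    (hsuper' : ∀ s t u, 0 ≤ s → s ≤ t → t ≤ u → u ≤ T → ω' s t + ω' t u ≤ ω' s u)
    (hcont : ContinuousOn (fun p : ℝ × ℝ => ω p.1 p.2)
      {p : ℝ × ℝ | 0 ≤ p.1 ∧ p.1 ≤ p.2 ∧ p.2 ≤ T})
    (hcont' : ContinuousOn (fun p : ℝ × ℝ => ω' p.1 p.2)
      {p : ℝ × ℝ | 0 ≤ p.1 ∧ p.1 ≤ p.2 ∧ p.2 ≤ T}) :
    Ncount T (fun s t => ω s t + ω' s t) δ ≤
      2 * Ncount T ω δ + 2 * Ncount T ω' δ + 2 := by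
  set W : ℝ → ℝ → ℝ := fun s t => ω s t + ω' s t
  set τ := tauSeq T W δ
  set N := Ncount T W δ
  rcases Ncount_eq_zero_or_tauSeq_Ncount_lt (T := T) (ω := W) (δ := δ) with hN0 | hN
  · omega
  have hτ : Monotone τ := monotone_tauSeq hT
  have hτ0 : 0 ≤ τ 0 := le_rfl
  have hτT n : τ n ≤ T := (tauSeq_mem_Icc hT n).2
  have hsplit : ∀ k < N, δ / 2 ≤ ω (τ k) (τ (k + 1)) ∨ δ / 2 ≤ ω' (τ k) (τ (k + 1)) := by
    intro k hk
    have hδW : δ ≤ W (τ k) (τ (k + 1)) :=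
      le_apply_tauSeq_succ (ω := W) hT (hcont.add hcont') ((hτ hk).trans_lt hN)
    by_contra! h
    linarith [h.1, h.2]
  calc N ≤ _ := Nat.le_count_add_count hsplit
    _ ≤ (2 * Ncount T ω δ + 1) + (2 * Ncount T ω' δ + 1) := add_le_add
        (count_le_two_mul_Ncount_add_one hT hδ hnonneg hsuper hcont hτ hτ0 hτT hN)
        (count_le_two_mul_Ncount_add_one hT hδ hnonneg' hsuper' hcont' hτ hτ0 hτT hN)
    _ = _ := by ring

theorem Ncount_add_le (T δ : ℝ) (hT : 0 ≤ T) (hδ : 0 < δ) (ω ω' : ℝ → ℝ → ℝ)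
    (hzero : ∀ t, 0 ≤ t → t ≤ T → ω t t = 0)
    (hzero' : ∀ t, 0 ≤ t → t ≤ T → ω' t t = 0)
    (hnonneg : ∀ s t, 0 ≤ s → s ≤ t → t ≤ T → 0 ≤ ω s t)
    (hnonneg' : ∀ s t, 0 ≤ s → s ≤ t → t ≤ T → 0 ≤ ω' s t)
    (hsuper : ∀ s t u, 0 ≤ s → s ≤ t → t ≤ u → u ≤ T → ω s t + ω t u ≤ ω s u)
    (hsuper' : ∀ s t u, 0 ≤ s → s ≤ t → t ≤ u → u ≤ T → ω' s t + ω' t u ≤ ω' s u)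
    (hcont : ContinuousOn (fun p : ℝ × ℝ => ω p.1 p.2)
      {p : ℝ × ℝ | 0 ≤ p.1 ∧ p.1 ≤ p.2 ∧ p.2 ≤ T})
    (hcont' : ContinuousOn (fun p : ℝ × ℝ => ω' p.1 p.2)
      {p : ℝ × ℝ | 0 ≤ p.1 ∧ p.1 ≤ p.2 ∧ p.2 ≤ T}) :
    Ncount T (fun s t => ω s t + ω' s t) δ ≤
      2 * Ncount T ω δ + 2 * Ncount T ω' δ + 2 :=
  Ncount_add_le_general T δ hT hδ ω ω' hnonneg hnonneg' hsuper hsuper' hcont hcont'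
end
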